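/- arXiv:2203.08658 — 8 statements merged into one kernel-verified Lean document; each statement's English description precedes it below -/
import Mathlib

section
/- For every n ≥ 1 and every finite list of colorings c_0, …, c_k, where for each i ≤ k the coloring c_i assigns a natural number to every m_i-element subset of ℕ and m_i ≤ n, there exist an infinite set T ⊆ ℕ and a natural number j such that c_i(s) ≠ j for every i ≤ k and every m_i-element subset s of T. -/
/-!
Clamp every colour at `k + 1`, so that the colourings take values in `Fin (k + 2)` while
colours `≤ k + 1` stay distinct. By the infinite Ramsey theorem, applied once per colouring,
some infinite `T` is homogeneous for all of them; their `k + 1` colours on `T` miss one of the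
`k + 2` values, and that value is never taken on `T`.

Ramsey's theorem for `(n + 1)`-sets is proved from the case of `n`-sets: repeatedly pick a point
`a` of an infinite set and shrink the part of it above `a` so that `s ↦ f (insert a s)` is
homogeneous on it. This yields a strictly increasing sequence of pivots where the colour of a
set depends only on its least element; infinitely many pivots share a colour.
-/

def IsHomogeneousOn {α : Type*} (f : Finset ℕ → α) (n : ℕ) (T : Set ℕ) (v : α) : Prop :=
  ∀ s : Finset ℕ, ↑s ⊆ T → s.card = n → f s = v

theorem IsHomogeneousOn.mono {α : Type*} {f : Finset ℕ → α} {n : ℕ} {S T : Set ℕ} {v : α}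
    (h : IsHomogeneousOn f n T v) (hST : S ⊆ T) : IsHomogeneousOn f n S v :=
  fun s hs => h s (hs.trans hST)

section Ramsey

variable {α : Type*} {f : Finset ℕ → α} {n : ℕ}

theorem exists_pivot_isHomogeneousOn
    (ih : ∀ (g : Finset ℕ → α) (S : Set ℕ), S.Infinite →
      ∃ T ⊆ S, T.Infinite ∧ ∃ v, IsHomogeneousOn g n T v)
    {S : Set ℕ} (hS : S.Infinite) :
    ∃ a ∈ S, ∃ T ⊆ S, T.Infinite ∧ (∀ x ∈ T, a < x) ∧
      ∃ v, IsHomogeneousOn (fun s => f (insert a s)) n T v := by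
  obtain ⟨a, haS⟩ := hS.nonempty
  obtain ⟨T, hTS, hT, v, hv⟩ := ih (fun s => f (insert a s)) _ (hS.sdiff (Set.finite_Iic a))
  exact ⟨a, haS, T, hTS.trans Set.sdiff_subset, hT, fun x hx => not_le.1 (hTS hx).2, v, hv⟩

theorem exists_strictMono_pivot_seq
    (ih : ∀ (g : Finset ℕ → α) (S : Set ℕ), S.Infinite →
      ∃ T ⊆ S, T.Infinite ∧ ∃ v, IsHomogeneousOn g n T v)
    {S : Set ℕ} (hS : S.Infinite) :
    ∃ a : ℕ → ℕ, StrictMono a ∧ Set.range a ⊆ S ∧ ∃ w : ℕ → α,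
      ∀ i, IsHomogeneousOn (fun s => f (insert (a i) s)) n (a '' Set.Ioi i) (w i) := by
  choose a haS T hTS hT hlt v hv using
    fun (S : Set ℕ) (hS : S.Infinite) => exists_pivot_isHomogeneousOn (f := f) ih hS
  let X : ℕ → {X : Set ℕ // X.Infinite} :=
    fun i => Nat.rec ⟨S, hS⟩ (fun _ Y => ⟨T Y.1 Y.2, hT Y.1 Y.2⟩) i
  let b : ℕ → ℕ := fun i => a (X i).1 (X i).2
  have hX : Antitone fun i => (X i).1 := antitone_nat_of_succ_le fun i => hTS _ _
  have hbX : ∀ i, b i ∈ (X i).1 := fun i => haS _ _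
  have hb_tail : ∀ i, b '' Set.Ioi i ⊆ (X (i + 1)).1 := by
    rintro i _ ⟨j, hij, rfl⟩
    exact hX (Nat.succ_le_of_lt hij) (hbX j)
  refine ⟨b, fun i j hij => hlt _ _ _ (hb_tail i ⟨j, hij, rfl⟩), ?_,
    fun i => v (X i).1 (X i).2, fun i => (hv _ _).mono (hb_tail i)⟩
  rintro _ ⟨i, rfl⟩
  exact hX (Nat.zero_le i) (hbX i)

theorem exists_isHomogeneousOn_of_pivot_seq [Finite α] {a : ℕ → ℕ} (ha : StrictMono a) {w : ℕ → α}
    (hw : ∀ i, IsHomogeneousOn (fun s => f (insert (a i) s)) n (a '' Set.Ioi i) (w i)) :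
    ∃ T ⊆ Set.range a, T.Infinite ∧ ∃ v, IsHomogeneousOn f (n + 1) T v := by
  obtain ⟨v, hv⟩ := Finite.exists_infinite_fiber w
  refine ⟨a '' (w ⁻¹' {v}), Set.image_subset_range _ _,
    (Set.infinite_coe_iff.1 hv).image ha.injective.injOn, v, fun s hsT hs => ?_⟩
  have hne : s.Nonempty := Finset.card_pos.1 (by omega)
  obtain ⟨i, hi, hia⟩ := hsT (s.min'_mem hne)
  have htail : ↑(s.erase (a i)) ⊆ a '' Set.Ioi i := by
    intro y hy
    obtain ⟨hyi, hys⟩ := Finset.mem_erase.1 hy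
    obtain ⟨j, -, rfl⟩ := hsT hys
    have : a i < a j := lt_of_le_of_ne (hia ▸ s.min'_le _ hys) (Ne.symm hyi)
    exact ⟨j, ha.lt_iff_lt.1 this, rfl⟩
  have hmem : a i ∈ s := hia ▸ s.min'_mem hne
  have : f (insert (a i) (s.erase (a i))) = w i :=
    hw i _ htail (by rw [Finset.card_erase_of_mem hmem, hs]; rfl)
  rwa [Finset.insert_erase hmem, show w i = v from hi] at this

theorem exists_infinite_isHomogeneousOn [Finite α] (n : ℕ) (f : Finset ℕ → α) {S : Set ℕ}
    (hS : S.Infinite) : ∃ T ⊆ S, T.Infinite ∧ ∃ v, IsHomogeneousOn f n T v := by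
  induction n generalizing f S with
  | zero => exact ⟨S, subset_rfl, hS, f ∅, fun s _ hs => by rw [Finset.card_eq_zero.1 hs]⟩
  | succ n ih =>
    obtain ⟨a, ha, haS, w, hw⟩ := exists_strictMono_pivot_seq (f := f) (fun g S hS => ih g hS) hS
    obtain ⟨T, hTa, hT, v, hv⟩ := exists_isHomogeneousOn_of_pivot_seq ha hw
    exact ⟨T, hTa.trans haS, hT, v, hv⟩

theorem exists_infinite_forall_isHomogeneousOn [Finite α] {ι : Type*} [Finite ι] (m : ι → ℕ)
    (f : ι → Finset ℕ → α) {S : Set ℕ} (hS : S.Infinite) :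
    ∃ T ⊆ S, T.Infinite ∧ ∀ i, ∃ v, IsHomogeneousOn (f i) (m i) T v := by
  classical
  have := Fintype.ofFinite ι
  suffices ∀ F : Finset ι, ∃ T ⊆ S, T.Infinite ∧ ∀ i ∈ F, ∃ v, IsHomogeneousOn (f i) (m i) T v by
    obtain ⟨T, hTS, hT, hF⟩ := this Finset.univ
    exact ⟨T, hTS, hT, fun i => hF i (Finset.mem_univ i)⟩
  intro F
  induction F using Finset.induction_on with
  | empty => exact ⟨S, subset_rfl, hS, by simp⟩
  | insert i F _ ih =>
    obtain ⟨T, hTS, hT, hF⟩ := ih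
    obtain ⟨T', hT'T, hT', v, hv⟩ := exists_infinite_isHomogeneousOn (m i) (f i) hT
    refine ⟨T', hT'T.trans hTS, hT', fun i' hi' => ?_⟩
    rcases Finset.mem_insert.1 hi' with rfl | hi'
    · exact ⟨v, hv⟩
    · obtain ⟨v', hv'⟩ := hF i' hi'
      exact ⟨v', hv'.mono hT'T⟩

end Ramsey

theorem thin_set_simultaneous_general (k : ℕ)
    (m : Fin (k + 1) → ℕ)
    (c : Fin (k + 1) → Finset ℕ → ℕ) :
    ∃ T : Set ℕ, T.Infinite ∧ ∃ j : ℕ,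
      ∀ i : Fin (k + 1), ∀ s : Finset ℕ, ↑s ⊆ T → s.card = m i → c i s ≠ j := by
  let g : Fin (k + 1) → Finset ℕ → Fin (k + 2) := fun i s => ⟨min (c i s) (k + 1), by omega⟩
  obtain ⟨T, -, hT, hg⟩ := exists_infinite_forall_isHomogeneousOn m g Set.infinite_univ
  choose v hv using hg
  obtain ⟨j, hj⟩ : ∃ j, j ∉ Set.range v := by
    by_contra! hv_surj
    simpa using Fintype.card_le_of_surjective v hv_surj
  refine ⟨T, hT, j, fun i s hsT hs hcs => hj ⟨i, ?_⟩⟩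
  rw [← hv i s hsT hs]
  ext
  simp [g, hcs, Nat.le_of_lt_succ j.isLt]

/-- For every `n ≥ 1` and every finite list of colorings `c 0, …, c k`,
where the coloring `c i` assigns a natural number to every `m i`-element subset of `ℕ`
and `m i ≤ n`, there exist an infinite set `T ⊆ ℕ` and a `j` such that `c i s ≠ j` for
every `i ≤ k` and every `m i`-element subset `s` of `T`. -/
theorem thin_set_simultaneous (n : ℕ) (hn : 1 ≤ n) (k : ℕ)
    (m : Fin (k + 1) → ℕ) (hm : ∀ i, m i ≤ n)
    (c : Fin (k + 1) → Finset ℕ → ℕ) :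
    ∃ T : Set ℕ, T.Infinite ∧ ∃ j : ℕ,
      ∀ i : Fin (k + 1), ∀ s : Finset ℕ, ↑s ⊆ T → s.card = m i → c i s ≠ j :=
  thin_set_simultaneous_general k m c
end

section
/- For every n ≥ 1 and every coloring c : ℕ → ℕ, there exist an infinite set S ⊆ ℕ of positive integers and a natural number i such that for every nonempty finite subset F of S with |F| ≤ n, the sum of the elements of F is not colored i, i.e., c(∑_{x∈F} x) ≠ i. -/
/-- Every element of an FS-set of a stream of positive naturals is positive. -/
lemma FS_pos {a : Stream' ℕ} {m : ℕ} (h : m ∈ Hindman.FS a) (ha : ∀ i, 0 < a.get i) :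
    0 < m := by
  induction h with
  | head' a => exact ha 0
  | tail' a m h ih => exact ih fun i => ha (i + 1)
  | cons' a m h ih => exact Nat.add_pos_left (ha 0) _

/-- thin-HT^{≤n}: For every `n ≥ 1` and every coloring `c : ℕ → ℕ`,
there exist an infinite set `S` of positive integers and a color `i` such that for
every nonempty finite subset `F` of `S` with `|F| ≤ n`, `c (∑ x ∈ F, x) ≠ i`. -/
theorem thin_HT_le_n (n : ℕ) (hn : 1 ≤ n) (c : ℕ → ℕ) :
    ∃ S : Set ℕ, S.Infinite ∧ (∀ x ∈ S, 0 < x) ∧ ∃ i : ℕ,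
      ∀ F : Finset ℕ, F.Nonempty → ↑F ⊆ S → F.card ≤ n → c (∑ x ∈ F, x) ≠ i := by
  classical
  set a : Stream' ℕ := fun i => i + 1 with ha
  set A : Set ℕ := {x | 0 < x ∧ c x = 0} with hA
  set B : Set ℕ := {x | 0 < x ∧ c x ≠ 0} with hB
  have hcov : Hindman.FS a ⊆ ⋃₀ {A, B} := by
    intro m hm
    have hpos : 0 < m := FS_pos hm fun i => Nat.succ_pos i
    simp only [Set.sUnion_insert, Set.sUnion_singleton, Set.mem_union, hA, hB,
      Set.mem_setOf_eq]
    by_cases h0 : c m = 0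
    · exact Or.inl ⟨hpos, h0⟩
    · exact Or.inr ⟨hpos, h0⟩
  obtain ⟨t, ht, b, hb⟩ := Hindman.FS_partition_regular a {A, B}
    ((Set.finite_singleton B).insert A) hcov
  -- In either case, all elements of `FS b` are positive and avoid a fixed color `i`.
  have key : ∃ i : ℕ, ∀ m ∈ Hindman.FS b, 0 < m ∧ c m ≠ i := by
    rcases ht with rfl | ht
    · exact ⟨1, fun m hm => ⟨(hb hm).1, by have := (hb hm).2; omega⟩⟩
    · rw [Set.mem_singleton_iff] at ht
      subst ht
      exact ⟨0, fun m hm => ⟨(hb hm).1, (hb hm).2⟩⟩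
  obtain ⟨i, hi⟩ := key
  have hbpos : ∀ k, 0 < b.get k := fun k =>
    (hi _ (Hindman.FS.singleton b k)).1
  -- blocks of indices
  set blk : ℕ → Finset ℕ := fun k => Finset.Ico (2 ^ k - 1) (2 ^ (k + 1) - 1) with hblk
  have hcard : ∀ k, (blk k).card = 2 ^ k := by
    intro k
    have h1 : 1 ≤ 2 ^ k := Nat.one_le_two_pow
    simp only [hblk, Nat.card_Ico]
    have : 2 ^ (k + 1) = 2 ^ k + 2 ^ k := by ring
    omega
  have hdisj : ∀ k l : ℕ, k < l → Disjoint (blk k) (blk l) := by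
    intro k l hkl
    rw [Finset.disjoint_left]
    intro j hj hj'
    simp only [hblk, Finset.mem_Ico] at hj hj'
    have h1 : 2 ^ (k + 1) ≤ 2 ^ l := Nat.pow_le_pow_right (by norm_num) hkl
    have h2 : 1 ≤ 2 ^ l := Nat.one_le_two_pow
    omega
  set x : ℕ → ℕ := fun k => ∑ j ∈ blk k, b.get j with hx
  have hxge : ∀ k, 2 ^ k ≤ x k := by
    intro k
    have := Finset.card_nsmul_le_sum (blk k) (fun j => b.get j) 1
      (fun j _ => hbpos j)
    rw [hcard k] at this
    simpa using this
  refine ⟨Set.range x, ?_, ?_, i, ?_⟩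
  · apply Set.infinite_of_not_bddAbove
    rintro ⟨M, hM⟩
    have h1 : x (M + 1) ≤ M := hM ⟨M + 1, rfl⟩
    have h2 : 2 ^ (M + 1) ≤ x (M + 1) := hxge (M + 1)
    have h3 : M + 1 < 2 ^ (M + 1) := Nat.lt_two_pow_self
    omega
  · rintro y ⟨k, rfl⟩
    exact lt_of_lt_of_le (Nat.two_pow_pos k) (hxge k)
  · intro F hF hFS _
    -- choose an index for each element of F
    have hchoice : ∀ f ∈ F, ∃ k, x k = f := fun f hf => hFS hf
    set g : ℕ → ℕ := fun f => if h : ∃ k, x k = f then h.choose else 0 with hg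
    have hgx : ∀ f ∈ F, x (g f) = f := by
      intro f hf
      have h : ∃ k, x k = f := hchoice f hf
      simp only [hg, dif_pos h]
      exact h.choose_spec
    set K : Finset ℕ := F.image g with hK
    have hsum1 : ∑ k ∈ K, x k = ∑ f ∈ F, f := by
      rw [hK, Finset.sum_image (fun u hu v hv huv => by
        rw [← hgx u hu, ← hgx v hv, huv])]
      exact Finset.sum_congr rfl fun f hf => hgx f hf
    have hKne : K.Nonempty := hF.image g
    have hpd : (↑K : Set ℕ).PairwiseDisjoint blk := by
      intro u _ v _ huv
      rcases lt_or_gt_of_ne huv with h | h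
      · exact hdisj u v h
      · exact (hdisj v u h).symm
    have hsum2 : ∑ j ∈ K.biUnion blk, b.get j = ∑ k ∈ K, x k :=
      Finset.sum_biUnion hpd
    have hne : (K.biUnion blk).Nonempty := by
      obtain ⟨k, hk⟩ := hKne
      have : (blk k).Nonempty := Finset.card_pos.mp (by rw [hcard k]; positivity)
      obtain ⟨j, hj⟩ := this
      exact ⟨j, Finset.mem_biUnion.mpr ⟨k, hk, hj⟩⟩
    have hmem : ∑ f ∈ F, f ∈ Hindman.FS b := by
      rw [← hsum1, ← hsum2]
      exact Hindman.FS.finset_sum b _ hne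
    exact (hi _ hmem).2
end

section
/- For every coloring c : ℕ → ℕ there exist an infinite set S of positive integers and a natural number i such that c(x) ≠ i for every x ∈ FS(S). -/
/-- `FS S` is the set of all sums of nonempty finite sets of distinct elements of `S`. -/
def FS (S : Set ℕ) : Set ℕ :=
  {m | ∃ F : Finset ℕ, F.Nonempty ∧ ↑F ⊆ S ∧ m = ∑ x ∈ F, x}

private lemma fs_pos (a : Stream' ℕ) (m : ℕ) (hm : m ∈ Hindman.FS a) :
    (∀ n, 0 < a.get n) → 0 < m := by
  induction hm with
  | head' a => intro h; exact h 0
  | tail' a m h ih => intro hp; exact ih fun n => hp (n + 1)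
  | cons' a m h ih => intro hp; exact Nat.add_pos_left (hp 0) _

/-- Block data: `(blk b n).1` is the right endpoint of the `n`-th block of indices,
`(blk b n).2` the sum of `b` over the `n`-th block. -/
private def blk (b : Stream' ℕ) : ℕ → ℕ × ℕ
  | 0 => (1, ∑ i ∈ Finset.Ico 0 1, b.get i)
  | n + 1 =>
    let p := blk b n
    (p.1 + p.2 + 1, ∑ i ∈ Finset.Ico p.1 (p.1 + p.2 + 1), b.get i)

/-- Left endpoint of the `n`-th block. -/
private def ep (b : Stream' ℕ) : ℕ → ℕ
  | 0 => 0
  | n + 1 => (blk b n).1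

/-- Value (sum) of the `n`-th block. -/
private def bv (b : Stream' ℕ) (n : ℕ) : ℕ := (blk b n).2

private lemma bv_eq (b : Stream' ℕ) (n : ℕ) :
    bv b n = ∑ i ∈ Finset.Ico (ep b n) (ep b (n + 1)), b.get i := by
  cases n with
  | zero => simp [bv, ep, blk]
  | succ n => simp [bv, ep, blk]

private lemma ep_lt (b : Stream' ℕ) (n : ℕ) : ep b n < ep b (n + 1) := by
  cases n with
  | zero => simp [ep, blk]
  | succ n => simp [ep, blk]

private lemma ep_strictMono (b : Stream' ℕ) : StrictMono (ep b) :=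
  strictMono_nat_of_lt_succ (ep_lt b)

private lemma bv_strictMono (b : Stream' ℕ) (hb : ∀ i, 1 ≤ b.get i) :
    StrictMono (bv b) := by
  apply strictMono_nat_of_lt_succ
  intro n
  have key : bv b (n + 1) = ∑ i ∈ Finset.Ico (blk b n).1 ((blk b n).1 + (blk b n).2 + 1),
      b.get i := by simp [bv, blk]
  have hcard : (Finset.Ico (blk b n).1 ((blk b n).1 + (blk b n).2 + 1)).card
      = (blk b n).2 + 1 := by
    rw [Nat.card_Ico]; omega
  have hle : (Finset.Ico (blk b n).1 ((blk b n).1 + (blk b n).2 + 1)).card • 1 ≤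
      ∑ i ∈ Finset.Ico (blk b n).1 ((blk b n).1 + (blk b n).2 + 1), b.get i :=
    Finset.card_nsmul_le_sum _ _ _ (fun i _ => hb i)
  rw [key]
  have : (blk b n).2 + 1 ≤ ∑ i ∈ Finset.Ico (blk b n).1 ((blk b n).1 + (blk b n).2 + 1),
      b.get i := by rw [← hcard]; simpa using hle
  show (blk b n).2 < _
  omega

private lemma blocks_disjoint (b : Stream' ℕ) {n m : ℕ} (hnm : n ≠ m) :
    Disjoint (Finset.Ico (ep b n) (ep b (n + 1))) (Finset.Ico (ep b m) (ep b (m + 1))) := by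
  rw [Finset.disjoint_left]
  intro i hi hi'
  simp only [Finset.mem_Ico] at hi hi'
  rcases lt_or_gt_of_ne hnm with h | h
  · have := (ep_strictMono b).le_iff_le.mpr (show n + 1 ≤ m from h)
    omega
  · have := (ep_strictMono b).le_iff_le.mpr (show m + 1 ≤ n from h)
    omega

private lemma sum_bv_mem (b : Stream' ℕ) (N : Finset ℕ) (hN : N.Nonempty) :
    ∑ n ∈ N, bv b n ∈ Hindman.FS b := by
  have hsum : ∑ n ∈ N, bv b n =
      ∑ i ∈ N.biUnion (fun n => Finset.Ico (ep b n) (ep b (n + 1))), b.get i := by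
    rw [Finset.sum_biUnion]
    · exact Finset.sum_congr rfl fun n _ => bv_eq b n
    · intro x _ y _ hxy
      exact blocks_disjoint b hxy
  rw [hsum]
  apply Hindman.FS.finset_sum
  obtain ⟨n, hn⟩ := hN
  refine ⟨ep b n, Finset.mem_biUnion.mpr ⟨n, hn, ?_⟩⟩
  simp [Finset.mem_Ico, ep_lt b n]

/-- thin-HT: For every coloring `c : ℕ → ℕ` there exist an infinite set
`S` of positive integers and a color `i` such that `c x ≠ i` for every `x ∈ FS S`. -/
theorem thin_HT (c : ℕ → ℕ) :
    ∃ S : Set ℕ, S.Infinite ∧ (∀ x ∈ S, 0 < x) ∧ ∃ i : ℕ, ∀ x ∈ FS S, c x ≠ i := by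
  classical
  set a : Stream' ℕ := Stream'.const 1 with ha
  have hapos : ∀ n, 0 < a.get n := fun n => by simp [ha]
  set X0 : Set ℕ := {x | c x = 0} ∩ Hindman.FS a with hX0
  set X1 : Set ℕ := {x | c x ≠ 0} ∩ Hindman.FS a with hX1
  have hcov : Hindman.FS a ⊆ ⋃₀ {X0, X1} := by
    intro x hx
    by_cases h : c x = 0
    · exact ⟨X0, by simp, ⟨h, hx⟩⟩
    · exact ⟨X1, by simp, ⟨h, hx⟩⟩
  obtain ⟨C, hC, b, hb⟩ :=
    Hindman.FS_partition_regular a {X0, X1} (Set.toFinite _) hcov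
  have hCsub : C ⊆ Hindman.FS a := by
    simp only [Set.mem_insert_iff, Set.mem_singleton_iff] at hC
    rcases hC with rfl | rfl
    · exact Set.inter_subset_right
    · exact Set.inter_subset_right
  have hbFSpos : ∀ m ∈ Hindman.FS b, 0 < m := fun m hm =>
    fs_pos a m (hCsub (hb hm)) hapos
  have hbpos : ∀ i, 1 ≤ b.get i := fun i => hbFSpos _ (Hindman.FS.singleton b i)
  refine ⟨Set.range (bv b), ?_, ?_, ?_⟩
  · exact Set.infinite_range_of_injective (bv_strictMono b hbpos).injective
  · rintro x ⟨n, rfl⟩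
    exact hbFSpos _ (by simpa using sum_bv_mem b {n} (Finset.singleton_nonempty n))
  · -- every element of FS (range (bv b)) lies in Hindman.FS b
    have key : ∀ x ∈ FS (Set.range (bv b)), x ∈ Hindman.FS b := by
      rintro x ⟨F, hFne, hFsub, rfl⟩
      set N : Finset ℕ := F.preimage (bv b)
        (Set.injOn_of_injective (bv_strictMono b hbpos).injective) with hN
      have hFN : N.image (bv b) = F := by
        rw [hN, Finset.image_preimage]
        apply Finset.filter_true_of_mem
        intro x hx
        exact hFsub hx
      have hNne : N.Nonempty := by
        by_contra h
        rw [Finset.not_nonempty_iff_eq_empty] at h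
        rw [h] at hFN
        simp only [Finset.image_empty] at hFN
        exact hFne.ne_empty hFN.symm
      have : ∑ x ∈ F, x = ∑ n ∈ N, bv b n := by
        rw [← hFN, Finset.sum_image]
        intro x _ y _ hxy
        exact (bv_strictMono b hbpos).injective hxy
      rw [this]
      exact sum_bv_mem b N hNne
    simp only [Set.mem_insert_iff, Set.mem_singleton_iff] at hC
    rcases hC with rfl | rfl
    · refine ⟨1, fun x hx => ?_⟩
      have : c x = 0 := (hb (key x hx)).1
      omega
    · exact ⟨0, fun x hx => (hb (key x hx)).1⟩
end

section
/- For every n ≥ 1 and every coloring c assigning a natural number to each n-element finite subset of ℕ, there exist an infinite set T ⊆ ℕ and a natural number i such that c(s) ≠ i for every n-element finite subset s of T. -/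
/-- Infinite Ramsey theorem for `n`-element subsets with 2 colors, relativized to an
arbitrary infinite set `S ⊆ ℕ`. -/
lemma infinite_ramsey_bool (n : ℕ) : ∀ (c : Finset ℕ → Bool) (S : Set ℕ), S.Infinite →
    ∃ T, T ⊆ S ∧ T.Infinite ∧ ∃ v : Bool,
      ∀ s : Finset ℕ, ↑s ⊆ T → s.card = n → c s = v := by
  induction n with
  | zero =>
    intro c S hS
    refine ⟨S, subset_rfl, hS, c ∅, ?_⟩
    intro s _ hcard
    rw [Finset.card_eq_zero] at hcard
    rw [hcard]
  | succ n ih =>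
    intro c S hS
    have step : ∀ p : {S' : Set ℕ // S'.Infinite},
        ∃ q : ℕ × {S' : Set ℕ // S'.Infinite} × Bool,
          q.1 ∈ p.1 ∧ q.2.1.1 ⊆ p.1 ∧ (∀ x ∈ q.2.1.1, q.1 < x) ∧
          ∀ s : Finset ℕ, ↑s ⊆ q.2.1.1 → s.card = n → c (insert q.1 s) = q.2.2 := by
      rintro ⟨S', hS'⟩
      obtain ⟨a, haS⟩ := hS'.nonempty
      have h2 : (S' ∩ {x | a < x}).Infinite := by
        have hsub : S' \ {x | x ≤ a} ⊆ S' ∩ {x | a < x} := by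
          intro x hx
          exact ⟨hx.1, (lt_of_not_ge hx.2 : a < x)⟩
        exact Set.Infinite.mono hsub (hS'.diff (Set.finite_le_nat a))
      obtain ⟨T, hTsub, hTinf, v, hv⟩ := ih (fun s => c (insert a s)) _ h2
      exact ⟨⟨a, ⟨T, hTinf⟩, v⟩, haS, fun x hx => (hTsub hx).1,
        fun x hx => (hTsub hx).2, hv⟩
    choose f hf using step
    let Sq : ℕ → {S' : Set ℕ // S'.Infinite} := fun k =>
      Nat.rec ⟨S, hS⟩ (fun _ p => (f p).2.1) k
    let a : ℕ → ℕ := fun k => (f (Sq k)).1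
    let b : ℕ → Bool := fun k => (f (Sq k)).2.2
    have ha_mem : ∀ k, a k ∈ (Sq k).1 := fun k => (hf (Sq k)).1
    have hsub : ∀ k, (Sq (k + 1)).1 ⊆ (Sq k).1 := fun k => (hf (Sq k)).2.1
    have hlt : ∀ k, ∀ x ∈ (Sq (k + 1)).1, a k < x := fun k => (hf (Sq k)).2.2.1
    have hhom : ∀ k, ∀ s : Finset ℕ, ↑s ⊆ (Sq (k + 1)).1 → s.card = n →
        c (insert (a k) s) = b k := fun k => (hf (Sq k)).2.2.2
    have hnest : ∀ j k, j ≤ k → (Sq k).1 ⊆ (Sq j).1 := by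
      intro j k hjk
      induction hjk with
      | refl => exact subset_rfl
      | @step m hm ih2 => exact fun x hx => ih2 (hsub m hx)
    have hmono : StrictMono a := by
      apply strictMono_nat_of_lt_succ
      intro k
      exact hlt k (a (k + 1)) (ha_mem (k + 1))
    have haS : ∀ k, a k ∈ S := fun k => hnest 0 k (Nat.zero_le k) (ha_mem k)
    have hpig : ∃ v : Bool, {k | b k = v}.Infinite := by
      by_contra h
      push_neg at h
      have huniv : {k | b k = true} ∪ {k | b k = false} = Set.univ := by
        ext k
        cases hbk : b k <;> simp [hbk]
      have : (Set.univ : Set ℕ).Finite := by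
        rw [← huniv]
        exact (h true).union (h false)
      exact Set.infinite_univ this
    obtain ⟨v, hI⟩ := hpig
    refine ⟨a '' {k | b k = v}, ?_, hI.image (hmono.injective.injOn), v, ?_⟩
    · rintro x ⟨k, _, rfl⟩
      exact haS k
    · intro s hsT hcard
      have hpos : 0 < s.card := by omega
      have hne : s.Nonempty := Finset.card_pos.mp hpos
      have hmin : s.min' hne ∈ s := Finset.min'_mem s hne
      obtain ⟨k, hkI, hk⟩ := hsT hmin
      have herase : ↑(s.erase (s.min' hne)) ⊆ (Sq (k + 1)).1 := by
        intro x hx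
        have hx' : x ∈ s.erase (s.min' hne) := hx
        have hxs : x ∈ s := Finset.mem_of_mem_erase hx'
        have hxne : x ≠ s.min' hne := Finset.ne_of_mem_erase hx'
        obtain ⟨j, hjI, hj⟩ := hsT hxs
        have hxgt : s.min' hne < x :=
          lt_of_le_of_ne (Finset.min'_le s x hxs) (Ne.symm hxne)
        have hjk : k < j := by
          have : a k < a j := by rw [hk, hj]; exact hxgt
          exact hmono.lt_iff_lt.mp this
        rw [← hj]
        exact hnest (k + 1) j hjk (ha_mem j)
      have hcard' : (s.erase (s.min' hne)).card = n := by
        rw [Finset.card_erase_of_mem hmin, hcard]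
        omega
      have hthis := hhom k (s.erase (s.min' hne)) herase hcard'
      have hbk : b k = v := hkI
      rw [hk] at hthis
      rwa [Finset.insert_erase hmin, hbk] at hthis

/-- Thin Set Theorem TS^n: For every `n ≥ 1` and every coloring `c`
assigning a natural number to each `n`-element finite subset of `ℕ`, there exist an
infinite set `T ⊆ ℕ` and a color `i` such that `c s ≠ i` for every `n`-element finite
subset `s` of `T`. -/
theorem thin_set_theorem (n : ℕ) (hn : 1 ≤ n) (c : Finset ℕ → ℕ) :
    ∃ T : Set ℕ, T.Infinite ∧ ∃ i : ℕ,
      ∀ s : Finset ℕ, ↑s ⊆ T → s.card = n → c s ≠ i := by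
  obtain ⟨T, _, hTinf, v, hv⟩ :=
    infinite_ramsey_bool n (fun s => decide (c s % 2 = 0)) Set.univ Set.infinite_univ
  refine ⟨T, hTinf, if v then 1 else 0, ?_⟩
  intro s hsT hcard
  have := hv s hsT hcard
  cases v with
  | true =>
    simp only [decide_eq_true_eq] at this
    simp only [if_true]
    omega
  | false =>
    simp only [decide_eq_false_iff_not] at this
    show c s ≠ 0
    omega
end

section
/- For every infinite set S of positive integers there exists an infinite set T of positive integers such that FS(T) ⊆ FS(S) and T has 2-apartness: for all x, y ∈ T with x < y, μ(x) < λ(y). -/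
/-- `lam x` is the least exponent in the binary expansion of `x > 0`,
i.e. the 2-adic valuation of `x`. -/
def lam (x : ℕ) : ℕ := padicValNat 2 x

/-- `mu x` is the greatest exponent in the binary expansion of `x > 0`,
i.e. `Nat.log 2 x`. -/
def mu (x : ℕ) : ℕ := Nat.log 2 x

lemma key (a : ℕ → ℕ) (k N : ℕ) :
    ∃ p : ℕ × ℕ, N ≤ p.1 ∧ p.1 < p.2 ∧ 2^k ∣ ∑ m ∈ Finset.Ico p.1 p.2, a m := by
  haveI : NeZero (2^k) := ⟨pow_ne_zero _ two_ne_zero⟩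
  have hcard : Fintype.card (ZMod (2^k)) < Fintype.card (Fin (2^k+1)) := by
    simp [ZMod.card]
  obtain ⟨t1, t2, hne, heq⟩ := Fintype.exists_ne_map_eq_of_card_lt
    (fun t : Fin (2^k+1) => ((∑ m ∈ Finset.Ico N (N + t), a m : ℕ) : ZMod (2^k))) hcard
  have hvne : (t1 : ℕ) ≠ (t2 : ℕ) := fun h => hne (Fin.ext h)
  wlog hlt : (t1 : ℕ) < (t2 : ℕ) generalizing t1 t2
  · exact this t2 t1 hne.symm heq.symm hvne.symm (by omega)
  refine ⟨(N + t1, N + t2), Nat.le_add_right _ _, by simp [hlt], ?_⟩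
  have hsplit : ∑ m ∈ Finset.Ico N (N + (t2:ℕ)), a m
      = ∑ m ∈ Finset.Ico N (N + (t1:ℕ)), a m + ∑ m ∈ Finset.Ico (N + (t1:ℕ)) (N + (t2:ℕ)), a m :=
    (Finset.sum_Ico_consecutive _ (by omega) (by omega)).symm
  have : ((∑ m ∈ Finset.Ico (N + (t1:ℕ)) (N + (t2:ℕ)), a m : ℕ) : ZMod (2^k)) = 0 := by
    have := heq
    rw [hsplit] at this
    push_cast at this ⊢
    exact left_eq_add.mp this
  exact (ZMod.natCast_eq_zero_iff _ _).mp this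

noncomputable def seq (a : ℕ → ℕ) : ℕ → ℕ × ℕ
  | 0 => (key a 0 0).choose
  | n+1 => (key a (mu (∑ m ∈ Finset.Ico (seq a n).1 (seq a n).2, a m) + 1) (seq a n).2).choose

noncomputable def tt (a : ℕ → ℕ) (n : ℕ) : ℕ := ∑ m ∈ Finset.Ico (seq a n).1 (seq a n).2, a m

lemma seq_lt (a : ℕ → ℕ) (n : ℕ) : (seq a n).1 < (seq a n).2 := by
  cases n with
  | zero => exact (key a 0 0).choose_spec.2.1
  | succ n => exact (key a _ _).choose_spec.2.1

lemma seq_le (a : ℕ → ℕ) (n : ℕ) : (seq a n).2 ≤ (seq a (n+1)).1 :=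
  (key a _ _).choose_spec.1

lemma seq_dvd (a : ℕ → ℕ) (n : ℕ) : 2 ^ (mu (tt a n) + 1) ∣ tt a (n+1) :=
  (key a _ _).choose_spec.2.2

lemma seq_le' (a : ℕ → ℕ) {m n : ℕ} (h : m < n) : (seq a m).2 ≤ (seq a n).1 := by
  induction n with
  | zero => omega
  | succ n ih =>
    rcases Nat.lt_succ_iff_lt_or_eq.mp h with h' | h'
    · exact le_trans (ih h') (le_trans (seq_lt a n).le (seq_le a n))
    · subst h'; exact seq_le a m

lemma tt_pos (a : ℕ → ℕ) (ha : ∀ m, 0 < a m) (n : ℕ) : 0 < tt a n := by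
  have : (Finset.Ico (seq a n).1 (seq a n).2).Nonempty := by
    rw [Finset.nonempty_Ico]; exact seq_lt a n
  exact Finset.sum_pos (fun i _ => ha i) this

lemma lam_le_mu {x : ℕ} (hx : 0 < x) : lam x ≤ mu x := by
  have h1 : 2 ^ lam x ≤ x := Nat.le_of_dvd hx pow_padicValNat_dvd
  exact (Nat.le_log_iff_pow_le one_lt_two hx.ne').mpr h1

lemma lt_pow_mu {x : ℕ} : x < 2 ^ (mu x + 1) := Nat.lt_pow_succ_log_self one_lt_two x

lemma pow_lam_le {x : ℕ} (hx : 0 < x) : 2 ^ lam x ≤ x := Nat.le_of_dvd hx pow_padicValNat_dvd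

lemma mu_lt_lam (a : ℕ → ℕ) (ha : ∀ m, 0 < a m) {m n : ℕ} (h : m < n) :
    mu (tt a m) < lam (tt a n) := by
  have step : ∀ k, mu (tt a k) < lam (tt a (k+1)) := by
    intro k
    have hpos := tt_pos a ha (k+1)
    have := (padicValNat_dvd_iff_le (p := 2) hpos.ne').mp (seq_dvd a k)
    simpa [lam] using this
  induction n with
  | zero => omega
  | succ n ih =>
    rcases Nat.lt_succ_iff_lt_or_eq.mp h with h' | h'
    · exact lt_of_lt_of_le (ih h')
        (le_trans (lam_le_mu (tt_pos a ha n)) (step n).le)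
    · subst h'; exact step m

lemma tt_strictMono (a : ℕ → ℕ) (ha : ∀ m, 0 < a m) : StrictMono (tt a) := by
  intro m n h
  calc tt a m < 2 ^ (mu (tt a m) + 1) := lt_pow_mu
    _ ≤ 2 ^ lam (tt a n) := Nat.pow_le_pow_right (by norm_num) (mu_lt_lam a ha h)
    _ ≤ tt a n := pow_lam_le (tt_pos a ha n)

/-- For every infinite set `S` of positive integers there is an infinite
set `T` of positive integers with `FS T ⊆ FS S` that has 2-apartness: for all
`x, y ∈ T` with `x < y`, `mu x < lam y`. -/
theorem exists_two_apart_subset (S : Set ℕ) (hS : S.Infinite) (hpos : ∀ x ∈ S, 0 < x) :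
    ∃ T : Set ℕ, T.Infinite ∧ (∀ x ∈ T, 0 < x) ∧ FS T ⊆ FS S ∧
      ∀ x ∈ T, ∀ y ∈ T, x < y → mu x < lam y := by
  classical
  set e := hS.natEmbedding with he
  set a : ℕ → ℕ := fun n => (e n : ℕ) with haa
  have haS : ∀ n, a n ∈ S := fun n => (e n).2
  have ha : ∀ n, 0 < a n := fun n => hpos _ (haS n)
  have hainj : Function.Injective a := fun m n h => e.injective (Subtype.ext h)
  have hmono := tt_strictMono a ha
  refine ⟨Set.range (tt a), Set.infinite_range_of_injective hmono.injective, ?_, ?_, ?_⟩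
  · rintro x ⟨n, rfl⟩; exact tt_pos a ha n
  · rintro x ⟨G, hGne, hGsub, rfl⟩
    obtain ⟨I, -, rfl⟩ := (Finset.subset_set_image_iff (s := Set.univ) (f := tt a)
      (t := G)).mp (by rw [Set.image_univ]; exact hGsub)
    have hIne : I.Nonempty := Finset.image_nonempty.mp hGne
    refine ⟨I.biUnion (fun n => (Finset.Ico (seq a n).1 (seq a n).2).image a), ?_, ?_, ?_⟩
    · obtain ⟨n, hn⟩ := hIne
      refine Finset.Nonempty.mono (Finset.subset_biUnion_of_mem _ hn) ?_
      exact Finset.Nonempty.image (by rw [Finset.nonempty_Ico]; exact seq_lt a n) a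
    · intro x hx
      simp only [Finset.coe_biUnion, Set.mem_iUnion, Finset.mem_coe, Finset.mem_image] at hx
      obtain ⟨n, -, m, -, rfl⟩ := hx
      exact haS m
    · have hdisj : (I : Set ℕ).PairwiseDisjoint
          (fun n => (Finset.Ico (seq a n).1 (seq a n).2).image a) := by
        intro m hm n hn hmn
        have hico : Disjoint (Finset.Ico (seq a m).1 (seq a m).2)
            (Finset.Ico (seq a n).1 (seq a n).2) := by
          rw [Finset.disjoint_left]
          intro x hx hx'
          simp only [Finset.mem_Ico] at hx hx'
          rcases Nat.lt_or_ge m n with h | h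
          · have := seq_le' a h; omega
          · have hnm : n < m := lt_of_le_of_ne h (Ne.symm hmn)
            have := seq_le' a hnm; omega
        exact (Finset.disjoint_image hainj).mpr hico
      rw [Finset.sum_biUnion hdisj, Finset.sum_image (fun x _ y _ h => hmono.injective h)]
      refine Finset.sum_congr rfl fun n _ => ?_
      rw [Finset.sum_image (fun x _ y _ h => hainj h)]
      rfl
  · rintro x ⟨m, rfl⟩ y ⟨n, rfl⟩ hxy
    have hmn : m < n := by
      rcases lt_trichotomy m n with h | h | h
      · exact h
      · subst h; exact absurd hxy (lt_irrefl _)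
      · exact absurd hxy (hmono h).asymm
    exact mu_lt_lam a ha hmn
end

section
/- For every n ≥ 1 and every coloring c : ℕ → ℕ, there exist an infinite set S of positive integers and a natural number i such that for every k with 1 ≤ k ≤ n and all x_1, …, x_k ∈ S (not necessarily distinct), c(x_1 + ⋯ + x_k) ≠ i. -/
open Finset in
/-- Infinite pigeonhole. -/
lemma my_pigeon {r : ℕ} (v : ℕ → Fin r) (K : Set ℕ) (hK : K.Infinite) :
    ∃ j, {k | k ∈ K ∧ v k = j}.Infinite := by
  by_contra h
  push_neg at h
  have : K ⊆ ⋃ j : Fin r, {k | k ∈ K ∧ v k = j} := fun k hk =>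
    Set.mem_iUnion.2 ⟨v k, hk, rfl⟩
  exact hK ((Set.finite_iUnion h).subset this)

/-- Infinite Ramsey theorem for colorings of strictly increasing `n`-tuples. -/
theorem my_ramsey (n : ℕ) : ∀ (r : ℕ), 0 < r →
    ∀ (g : (Fin n → ℕ) → Fin r) (A : Set ℕ), A.Infinite →
    ∃ H, H ⊆ A ∧ H.Infinite ∧ ∃ v, ∀ x : Fin n → ℕ,
      StrictMono x → (∀ i, x i ∈ H) → g x = v := by
  induction n with
  | zero =>
    intro r hr g A hA
    exact ⟨A, le_refl _, hA, g (Fin.elim0), fun x _ _ => by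
      rw [Subsingleton.elim x Fin.elim0]⟩
  | succ n ih =>
    intro r hr g A hA
    have key : ∀ B : {B : Set ℕ // B.Infinite},
        ∃ p : ℕ × {C : Set ℕ // C.Infinite} × Fin r, p.1 ∈ B.1 ∧ p.2.1.1 ⊆ B.1 ∧
          (∀ y ∈ p.2.1.1, p.1 < y) ∧
          (∀ y : Fin n → ℕ, StrictMono y → (∀ i, y i ∈ p.2.1.1) →
            g (Fin.cons p.1 y) = p.2.2) := by
      rintro ⟨B, hB⟩
      obtain ⟨a, ha⟩ := hB.nonempty
      have hB' : (B \ Set.Iic a).Infinite := hB.diff (Set.finite_Iic a)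
      obtain ⟨H', hH'sub, hH'inf, v', hv'⟩ :=
        ih r hr (fun y => g (Fin.cons a y)) _ hB'
      refine ⟨⟨a, ⟨H', hH'inf⟩, v'⟩, ha, fun y hy => (hH'sub hy).1, ?_, hv'⟩
      intro y hy
      have := (hH'sub hy).2
      simp only [Set.mem_Iic, not_le] at this
      exact this
    choose step h1 h2 h3 h4 using key
    set seq : ℕ → {B : Set ℕ // B.Infinite} :=
      fun k => Nat.rec ⟨A, hA⟩ (fun _ B => (step B).2.1) k with hseq
    have seqsucc : ∀ k, seq (k + 1) = (step (seq k)).2.1 := fun k => rfl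
    set a : ℕ → ℕ := fun k => (step (seq k)).1 with ha
    set v : ℕ → Fin r := fun k => (step (seq k)).2.2 with hv
    have chain : ∀ k d, (seq (k + d)).1 ⊆ (seq k).1 := by
      intro k d
      induction d with
      | zero => exact le_refl _
      | succ d hd => exact le_trans (by rw [← Nat.add_assoc, seqsucc]; exact h2 _) hd
    have chain' : ∀ k j, k ≤ j → (seq j).1 ⊆ (seq k).1 := by
      intro k j hkj
      obtain ⟨d, rfl⟩ := Nat.exists_eq_add_of_le hkj
      exact chain k d
    have hmemA : ∀ k, a k ∈ A := fun k => chain' 0 k (Nat.zero_le _) (h1 (seq k))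
    have hlt : ∀ k j, k < j → a k < a j := by
      intro k j hkj
      have : a j ∈ (seq (k + 1)).1 := chain' (k + 1) j hkj (h1 (seq j))
      rw [seqsucc] at this
      exact h3 (seq k) _ this
    have hamono : StrictMono a := fun k j h => hlt k j h
    obtain ⟨j, hj⟩ := my_pigeon v Set.univ Set.infinite_univ
    refine ⟨a '' {k | k ∈ Set.univ ∧ v k = j}, ?_, hj.image (hamono.injective.injOn), j, ?_⟩
    · rintro _ ⟨k, _, rfl⟩; exact hmemA k
    · intro x hx hxmem
      have hex : ∀ i, ∃ k, (k ∈ Set.univ ∧ v k = j) ∧ a k = x i := fun i => hxmem i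
      choose kk hkk1 hkk2 using hex
      have hkmono : ∀ i i' : Fin (n + 1), i < i' → kk i < kk i' := by
        intro i i' hii'
        by_contra hle
        push_neg at hle
        have : a (kk i') ≤ a (kk i) := hamono.monotone hle
        rw [hkk2, hkk2] at this
        exact absurd (hx hii') (not_lt.mpr this)
      have htail : ∀ i : Fin n, Fin.tail x i ∈ (seq (kk 0 + 1)).1 := by
        intro i
        have : kk 0 < kk i.succ := hkmono 0 i.succ (Fin.succ_pos i)
        have hmem : a (kk i.succ) ∈ (seq (kk 0 + 1)).1 :=
          chain' (kk 0 + 1) (kk i.succ) this (h1 (seq (kk i.succ)))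
        rw [hkk2] at hmem
        exact hmem
      have htailmono : StrictMono (Fin.tail x) := by
        intro i i' hii'
        exact hx (by simpa [Fin.succ_lt_succ_iff] using hii')
      have := h4 (seq (kk 0)) (Fin.tail x) htailmono (by
        intro i; have := htail i; rwa [seqsucc] at this)
      have heq : g x = v (kk 0) := by
        rw [← Fin.cons_self_tail x, ← hkk2 0]
        exact this
      rw [heq]
      exact (hkk1 0).2

/-- Simultaneous homogenization for a finite family of tuple colorings. -/
lemma my_ramsey_family (n r : ℕ) (hr : 0 < r)
    (G : (Fin n → ℕ) → (Fin n → ℕ) → Fin r) (V : Finset (Fin n → ℕ)) :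
    ∀ (A : Set ℕ), A.Infinite → ∃ H, H ⊆ A ∧ H.Infinite ∧
      ∃ w : (Fin n → ℕ) → Fin r, ∀ m ∈ V, ∀ x : Fin n → ℕ,
        StrictMono x → (∀ i, x i ∈ H) → G m x = w m := by
  classical
  induction V using Finset.induction_on with
  | empty =>
    intro A hA
    exact ⟨A, le_refl _, hA, fun _ => ⟨0, hr⟩, by simp⟩
  | insert _ _ hnotmem =>
    rename_i m V ih
    intro A hA
    obtain ⟨H', hH'A, hH'inf, w', hw'⟩ := ih A hA
    obtain ⟨H, hHH', hHinf, v, hvhom⟩ := my_ramsey n r hr (G m) H' hH'inf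
    refine ⟨H, le_trans hHH' hH'A, hHinf, Function.update w' m v, ?_⟩
    intro m' hm' x hx hxmem
    rcases Finset.mem_insert.1 hm' with rfl | hm'V
    · rw [Function.update_self]
      exact hvhom x hx hxmem
    · have hne : m' ≠ m := fun h => hnotmem (h ▸ hm'V)
      rw [Function.update_of_ne hne]
      exact hw' m' hm'V x hx (fun i => hHH' (hxmem i))

/-- thin-HT^{≤n} with repetitions allowed: For every `n ≥ 1` and every
coloring `c : ℕ → ℕ`, there exist an infinite set `S` of positive integers and a color
`i` such that for every `k` with `1 ≤ k ≤ n` and all `x 1, …, x k ∈ S` (not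
necessarily distinct), `c (x 1 + ⋯ + x k) ≠ i`. -/
theorem thin_HT_le_n_with_repetition (n : ℕ) (hn : 1 ≤ n) (c : ℕ → ℕ) :
    ∃ S : Set ℕ, S.Infinite ∧ (∀ x ∈ S, 0 < x) ∧ ∃ i : ℕ,
      ∀ k : ℕ, 1 ≤ k → k ≤ n → ∀ x : Fin k → ℕ, (∀ j, x j ∈ S) →
        c (∑ j, x j) ≠ i := by
  classical
  set K : ℕ := (n + 1) ^ n with hK
  set t : ℕ → Fin (K + 1) :=
    fun x => ⟨min x K, Nat.lt_succ_of_le (min_le_right _ _)⟩ with ht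
  set G : (Fin n → ℕ) → (Fin n → ℕ) → Fin (K + 1) :=
    fun m x => t (c (∑ i, m i * x i)) with hG
  set V : Finset (Fin n → ℕ) :=
    Fintype.piFinset (fun _ : Fin n => Finset.range (n + 1)) with hV
  have hVcard : V.card = K := by
    rw [hV, Fintype.card_piFinset]
    simp [hK]
  have hIoi : (Set.Ioi 0 : Set ℕ).Infinite := Set.Ioi_infinite 0
  obtain ⟨H, hHA, hHinf, w, hw⟩ :=
    my_ramsey_family n (K + 1) (Nat.succ_pos K) G V (Set.Ioi 0) hIoi
  obtain ⟨iF, hiF⟩ : ∃ iF : Fin (K + 1), iF ∉ V.image w := by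
    by_contra h
    push_neg at h
    have hsub : (Finset.univ : Finset (Fin (K + 1))) ⊆ V.image w := fun i _ => h i
    have := Finset.card_le_card hsub
    have h2 := Finset.card_image_le (s := V) (f := w)
    simp [Finset.card_univ, hVcard] at this
    omega
  refine ⟨H, hHinf, fun x hx => hHA hx, iF.val, ?_⟩
  intro k hk1 hkn x hxmem hceq
  -- the set of values of x, extended to an n-element subset of H
  set T : Finset ℕ := Finset.image x Finset.univ with hT
  have hTH : ↑T ⊆ H := by
    intro y hy
    simp only [hT, Finset.coe_image, Set.mem_image] at hy
    obtain ⟨j, _, rfl⟩ := hy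
    exact hxmem j
  have hTcard : T.card ≤ n :=
    le_trans Finset.card_image_le (by simp [hkn])
  obtain ⟨D, hDsub, hDcard⟩ :=
    (hHinf.diff (Finset.finite_toSet T)).exists_subset_card_eq (n - T.card)
  set T' : Finset ℕ := T ∪ D with hT'
  have hdisj : Disjoint T D := by
    rw [Finset.disjoint_right]
    intro y hyD hyT
    exact (hDsub hyD).2 hyT
  have hT'card : T'.card = n := by
    rw [hT', Finset.card_union_of_disjoint hdisj, hDcard]
    omega
  have hT'H : ↑T' ⊆ H := by
    intro y hy
    rw [hT', Finset.coe_union] at hy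
    rcases hy with hy | hy
    · exact hTH hy
    · exact (hDsub hy).1
  set z := T'.orderEmbOfFin hT'card with hz
  have hzH : ∀ i, z i ∈ H := fun i => hT'H (T'.orderEmbOfFin_mem hT'card i)
  set m : Fin n → ℕ :=
    fun i => (Finset.univ.filter (fun j => x j = z i)).card with hm
  have hmV : m ∈ V := by
    rw [hV, Fintype.mem_piFinset]
    intro i
    rw [Finset.mem_range]
    have : m i ≤ (Finset.univ : Finset (Fin k)).card := Finset.card_filter_le _ _
    simp only [Finset.card_univ, Fintype.card_fin] at this
    omega
  -- each value of x is some z i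
  have hzx : ∀ j, ∃ i, z i = x j := by
    intro j
    have hmem : (x j : ℕ) ∈ (↑T' : Set ℕ) := by
      rw [hT', Finset.coe_union]
      left
      simp [hT]
    rw [← Finset.range_orderEmbOfFin T' hT'card] at hmem
    exact hmem
  choose idx hidx using hzx
  have step1 : ∀ j, (∑ i : Fin n, if x j = z i then z i else 0) = x j := by
    intro j
    rw [Finset.sum_eq_single (idx j)]
    · rw [if_pos (hidx j).symm]
      exact hidx j
    · intro b _ hb
      rw [if_neg]
      intro hxb
      exact hb (z.injective ((hxb.symm.trans (hidx j).symm)).symm).symm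
    · intro h
      exact absurd (Finset.mem_univ _) h
  have hsum : (∑ j, x j) = ∑ i, m i * z i := by
    calc (∑ j, x j) = ∑ j, ∑ i : Fin n, if x j = z i then z i else 0 := by
          rw [Finset.sum_congr rfl (fun j _ => (step1 j).symm)]
      _ = ∑ i : Fin n, ∑ j, if x j = z i then z i else 0 := Finset.sum_comm
      _ = ∑ i, m i * z i := by
          refine Finset.sum_congr rfl (fun i _ => ?_)
          rw [← Finset.sum_filter, Finset.sum_const, hm, smul_eq_mul]
  have hhom := hw m hmV (fun i => z i) (T'.orderEmbOfFin hT'card).strictMono hzH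
  rw [hG] at hhom
  simp only at hhom
  rw [← hsum, hceq] at hhom
  have htiF : t iF.val = iF := by
    rw [ht]
    exact Fin.ext (by simp [Nat.lt_succ_iff.mp iF.isLt])
  rw [htiF] at hhom
  exact hiF (hhom ▸ Finset.mem_image_of_mem w hmV)
end

section
/- There exists a (computable) coloring c : ℕ → Bool such that for every infinite set S of positive integers, c is not constant on the set S ∪ {x + y : x, y ∈ S}, where the sum x + y is allowed to have x = y (in particular 2x is included for each x ∈ S). -/
/-! Colour `n` by the parity of `⌊log₂ n⌋`: for `x > 0`, doubling raises `⌊log₂ x⌋` by one, so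
`x ∈ S` and `x + x` always get different colours. -/

namespace Nat

theorem log_eq_ite (b n : ℕ) :
    log b n = if 1 < b ∧ b ≤ n then log b (n / b) + 1 else 0 := by
  split_ifs with h
  · exact log_of_one_lt_of_le h.1 h.2
  · exact log_eq_zero_iff.2 (by omega)

theorem bodd_log_two_mul_ne {x : ℕ} (hx : x ≠ 0) :
    (log 2 (2 * x)).bodd ≠ (log 2 x).bodd := by
  rw [mul_comm, log_mul_base one_lt_two hx, bodd_succ]
  exact Bool.not_ne_self _

end Nat

namespace Primrec

/-- Strong recursion: `log b n` is read off the values below `n` at index `n / b`. -/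
theorem nat_log : Primrec₂ Nat.log := by
  refine nat_strong_rec _ (g := fun b L =>
    some (if 1 < b ∧ b ≤ L.length then L.getD (L.length / b) 0 + 1 else 0)) ?_ ?_
  · refine option_some.comp (ite (PrimrecPred.and ?_ ?_) ?_ (const 0))
    · exact nat_lt.comp (const 1) fst
    · exact nat_le.comp fst (list_length.comp snd)
    · exact succ.comp ((list_getD 0).comp snd (nat_div.comp (list_length.comp snd) fst))
  · intro b n
    rw [Nat.log_eq_ite]
    simp only [List.length_map, List.length_range, Option.some.injEq]
    split_ifs with h
    · have : n / b < n := Nat.div_lt_self (by omega) h.1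
      simp [this]
    · rfl

end Primrec

/-- There is a computable coloring `c : ℕ → Bool` such that for every
infinite set `S` of positive integers, `c` is not constant on
`S ∪ {x + y : x, y ∈ S}` (sums with repetition allowed, so `2x` is included). -/
theorem HT_le_two_fails_with_repetition :
    ∃ c : ℕ → Bool, Computable c ∧
      ∀ S : Set ℕ, S.Infinite → (∀ x ∈ S, 0 < x) →
        ¬ ∀ z₁ ∈ S ∪ {z | ∃ x ∈ S, ∃ y ∈ S, z = x + y},
          ∀ z₂ ∈ S ∪ {z | ∃ x ∈ S, ∃ y ∈ S, z = x + y}, c z₁ = c z₂ := by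
  refine ⟨fun n => (Nat.log 2 n).bodd,
    (Primrec.nat_bodd.comp (Primrec.nat_log.comp (.const 2) .id)).to_comp, ?_⟩
  intro S hS hpos hconst
  obtain ⟨x, hx⟩ := hS.nonempty
  refine Nat.bodd_log_two_mul_ne (hpos x hx).ne' (hconst _ ?_ x (.inl hx))
  exact .inr ⟨x, hx, x, hx, two_mul x⟩
end

section
/- For every n ≥ 1, every infinite set A ⊆ ℕ of positive integers, and every coloring c : ℕ → ℕ, there exist an infinite set T ⊆ A and a natural number i such that for every nonempty finite subset F of T with |F| ≤ n, c(∑_{x∈F} x) ≠ i. -/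
/-- Pigeonhole: a function on `ℕ` with values `< r` has an infinite fiber. -/
lemma thinHT_pigeon (r : ℕ) (g : ℕ → ℕ) (hg : ∀ j, g j < r) :
    ∃ w, w < r ∧ {j | g j = w}.Infinite := by
  by_contra h
  push_neg at h
  have hfin : (Set.univ : Set ℕ).Finite := by
    have hsub : (Set.univ : Set ℕ) ⊆ ⋃ w ∈ Finset.range r, {j | g j = w} := by
      intro j _
      simp only [Set.mem_iUnion, Finset.mem_range, Set.mem_setOf_eq]
      exact ⟨g j, hg j, rfl⟩
    refine Set.Finite.subset (Set.Finite.biUnion (Finset.range r).finite_toSet ?_) hsub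
    intro w hw
    exact h w (by simpa using hw)
  exact Set.infinite_univ hfin

/-- Infinite Ramsey theorem for `k`-element subsets of an infinite set of naturals,
with colors bounded by `r`. -/
lemma thinHT_ramsey (k : ℕ) :
    ∀ (r : ℕ) (f : Finset ℕ → ℕ), (∀ F, f F < r) →
    ∀ (S : Set ℕ), S.Infinite →
    ∃ H, H ⊆ S ∧ H.Infinite ∧ ∃ v, v < r ∧
      ∀ F : Finset ℕ, F.card = k → ↑F ⊆ H → f F = v := by
  induction k with
  | zero =>
    intro r f hf S hS
    refine ⟨S, subset_rfl, hS, f ∅, hf ∅, ?_⟩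
    intro F hF _
    rw [Finset.card_eq_zero.mp hF]
  | succ k ih =>
    intro r f hf S hS
    have key : ∀ (S' : Set ℕ), S'.Infinite →
        ∃ H : Set ℕ, ∃ v : ℕ, (H ⊆ S' \ {sInf S'}) ∧ H.Infinite ∧ v < r ∧
          ∀ F : Finset ℕ, F.card = k → ↑F ⊆ H → f (insert (sInf S') F) = v := by
      intro S' hS'
      obtain ⟨H, h1, h2, v, hv, hhom⟩ := ih r (fun F => f (insert (sInf S') F))
        (fun F => hf _) (S' \ {sInf S'}) (hS'.diff (Set.finite_singleton _))
      exact ⟨H, v, h1, h2, hv, hhom⟩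
    choose Hf Vf hsub hinf hVlt hhom using key
    -- iterate the step
    let Fn : {T : Set ℕ // T.Infinite} → {T : Set ℕ // T.Infinite} :=
      fun p => ⟨Hf p.1 p.2, hinf p.1 p.2⟩
    let C : ℕ → {T : Set ℕ // T.Infinite} := fun j => Fn^[j] ⟨S, hS⟩
    have hCsucc : ∀ j, C (j + 1) = Fn (C j) := fun j =>
      Function.iterate_succ_apply' Fn j ⟨S, hS⟩
    have hC0 : C 0 = ⟨S, hS⟩ := rfl
    let a : ℕ → ℕ := fun j => sInf (C j).1
    let w : ℕ → ℕ := fun j => Vf (C j).1 (C j).2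
    have hstep : ∀ j, (C (j + 1)).1 ⊆ (C j).1 \ {a j} := by
      intro j
      rw [hCsucc j]
      exact hsub (C j).1 (C j).2
    have hwlt : ∀ j, w j < r := fun j => hVlt (C j).1 (C j).2
    have hhomj : ∀ j, ∀ F : Finset ℕ, F.card = k → ↑F ⊆ (C (j + 1)).1 →
        f (insert (a j) F) = w j := by
      intro j F hF hFs
      rw [hCsucc j] at hFs
      exact hhom (C j).1 (C j).2 F hF hFs
    have haMem : ∀ j, a j ∈ (C j).1 := fun j => Nat.sInf_mem (C j).2.nonempty
    have hmono : ∀ i j, i ≤ j → (C j).1 ⊆ (C i).1 := by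
      intro i j hij
      induction j with
      | zero => simp_all
      | succ j ihj =>
        rcases Nat.lt_or_ge i (j + 1) with h | h
        · exact fun x hx => ihj (Nat.lt_succ_iff.mp h)
            ((hstep j hx).1)
        · have : i = j + 1 := le_antisymm hij h
          subst this; exact fun x hx => hx
    have haC : ∀ i j, i ≤ j → a j ∈ (C i).1 := fun i j hij => hmono i j hij (haMem j)
    have haSM : StrictMono a := by
      apply strictMono_nat_of_lt_succ
      intro j
      have h1 : a (j + 1) ∈ (C j).1 \ {a j} := hstep j (haMem (j + 1))
      have h2 : a j ≤ a (j + 1) := Nat.sInf_le h1.1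
      exact lt_of_le_of_ne h2 (fun h => h1.2 h.symm)
    obtain ⟨v, hvr, hE⟩ := thinHT_pigeon r w hwlt
    refine ⟨a '' {j | w j = v}, ?_, ?_, v, hvr, ?_⟩
    · rintro x ⟨j, _, rfl⟩
      have := haC 0 j (Nat.zero_le j)
      rwa [hC0] at this
    · exact hE.image haSM.injective.injOn
    · intro F hcard hFsub
      have hFne : F.Nonempty := Finset.card_pos.mp (by omega)
      set x₀ := F.min' hFne with hx₀
      obtain ⟨j₀, hj₀, hx₀eq⟩ := hFsub (F.min'_mem hFne)
      have herase : ∀ y ∈ F.erase x₀, y ∈ (C (j₀ + 1)).1 := by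
        intro y hy
        obtain ⟨j, _, hjy⟩ := hFsub (Finset.mem_of_mem_erase hy)
        have hylt : x₀ < y := lt_of_le_of_ne (F.min'_le y (Finset.mem_of_mem_erase hy))
          (Ne.symm (Finset.ne_of_mem_erase hy))
        have hjgt : j₀ < j := by
          by_contra hle
          push_neg at hle
          have : a j ≤ a j₀ := haSM.le_iff_le.mpr hle
          rw [hjy, hx₀eq] at this
          omega
        rw [← hjy]
        exact hmono (j₀ + 1) j hjgt (haMem j)
      have hcard' : (F.erase x₀).card = k := by
        rw [Finset.card_erase_of_mem (F.min'_mem hFne), hcard]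
        omega
      have : f (insert (a j₀) (F.erase x₀)) = w j₀ :=
        hhomj j₀ (F.erase x₀) hcard' (fun y hy => herase y hy)
      rw [hx₀eq, ← hx₀, Finset.insert_erase (F.min'_mem hFne)] at this
      rw [this]
      exact hj₀

/-- Simultaneous homogeneity for all sizes `≤ m`. -/
lemma thinHT_multiramsey (r : ℕ) (f : Finset ℕ → ℕ) (hf : ∀ F, f F < r) :
    ∀ (m : ℕ) (S : Set ℕ), S.Infinite →
    ∃ H, H ⊆ S ∧ H.Infinite ∧ ∃ v : ℕ → ℕ, (∀ k, v k < r) ∧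
      ∀ k, k ≤ m → ∀ F : Finset ℕ, F.card = k → ↑F ⊆ H → f F = v k := by
  intro m
  induction m with
  | zero =>
    intro S hS
    refine ⟨S, subset_rfl, hS, fun _ => f ∅, fun _ => hf ∅, ?_⟩
    intro k hk F hF _
    have : k = 0 := Nat.le_zero.mp hk
    subst this
    rw [Finset.card_eq_zero.mp hF]
  | succ m ihm =>
    intro S hS
    obtain ⟨H, hHS, hHinf, v, hvlt, hvhom⟩ := ihm S hS
    obtain ⟨H', hH'H, hH'inf, v', hv'lt, hv'hom⟩ := thinHT_ramsey (m + 1) r f hf H hHinf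
    refine ⟨H', hH'H.trans hHS, hH'inf, fun k => if k = m + 1 then v' else v k, ?_, ?_⟩
    · intro k
      by_cases h : k = m + 1 <;> simp [h, hv'lt, hvlt]
    · intro k hk F hF hFsub
      by_cases h : k = m + 1
      · subst h
        simp only [if_pos rfl]
        exact hv'hom F hF hFsub
      · have hk' : k ≤ m := by omega
        simp only [if_neg h]
        exact hvhom k hk' F hF (hFsub.trans hH'H)

/-- thin-HT^{≤n} relativized to an infinite ground set: For every
`n ≥ 1`, every infinite set `A` of positive integers, and every coloring `c : ℕ → ℕ`,
there exist an infinite set `T ⊆ A` and a color `i` such that for every nonempty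
finite subset `F` of `T` with `|F| ≤ n`, `c (∑ x ∈ F, x) ≠ i`. -/
theorem thin_HT_le_n_relativized (n : ℕ) (hn : 1 ≤ n) (A : Set ℕ)
    (hA : A.Infinite) (hpos : ∀ x ∈ A, 0 < x) (c : ℕ → ℕ) :
    ∃ T : Set ℕ, T ⊆ A ∧ T.Infinite ∧ ∃ i : ℕ,
      ∀ F : Finset ℕ, F.Nonempty → ↑F ⊆ T → F.card ≤ n → c (∑ x ∈ F, x) ≠ i := by
  set d : Finset ℕ → ℕ := fun F => min (c (∑ x ∈ F, x)) (n + 1) with hd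
  have hdlt : ∀ F, d F < n + 2 := by
    intro F
    simp only [hd]
    omega
  obtain ⟨H, hHA, hHinf, v, hvlt, hvhom⟩ := thinHT_multiramsey (n + 2) d hdlt n A hA
  -- choose a color i ≤ n not among the homogeneous values v 1 .. v n
  have hex : ∃ i ∈ Finset.range (n + 1), i ∉ (Finset.Icc 1 n).image v := by
    by_contra h
    push_neg at h
    have hsub : Finset.range (n + 1) ⊆ (Finset.Icc 1 n).image v := fun i hi => h i hi
    have h1 : (Finset.range (n + 1)).card ≤ ((Finset.Icc 1 n).image v).card :=
      Finset.card_le_card hsub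
    have h2 : ((Finset.Icc 1 n).image v).card ≤ (Finset.Icc 1 n).card :=
      Finset.card_image_le
    simp [Nat.card_Icc] at h1 h2
    omega
  obtain ⟨i, hirange, hinot⟩ := hex
  have hile : i ≤ n := by
    simpa [Nat.lt_succ_iff] using hirange
  refine ⟨H, hHA, hHinf, i, ?_⟩
  intro F hFne hFsub hFcard heq
  have hk1 : 1 ≤ F.card := Finset.card_pos.mpr hFne
  have hdF : d F = v F.card := hvhom F.card hFcard F rfl hFsub
  have hdF' : d F = i := by
    simp only [hd, heq]
    omega
  apply hinot
  exact Finset.mem_image.mpr ⟨F.card, Finset.mem_Icc.mpr ⟨hk1, hFcard⟩, by rw [← hdF, hdF']⟩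
end
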